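/- There exist c > 0 and K ∈ ℕ (depending on β, m, δ) such that the following holds. Let τ₁, τ₂, τ₃ ∈ ℝ and k₁, k₂, k₃ ∈ ℤ \ {0} satisfy τ₁ + τ₂ + τ₃ = 0, k₁ + k₂ + k₃ = 0 and max{|k₁|, |k₂|, |k₃|} ≥ K. Set M_j := ⟨(τ_j - λ_{k_j})/⟨k_j⟩^δ⟩, N_max := max_j ⟨k_j⟩, N_min := min_j ⟨k_j⟩. Suppose the maximum of (M₁, M₂, M₃) is attained at an index j₀ at which the minimum of (⟨k₁⟩, ⟨k₂⟩, ⟨k₃⟩) is also attained, and that M_j > M_{j₀}·(N_min/N_max)^δ for some index j ≠ j₀. Then max_{j ≠ j₀} M_j ≥ c · N_max^{2m-δ} · N_min. -/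

import Mathlib

/-!
Since `τ₁ + τ₂ + τ₃ = 0`, the resonance `λ_{k₁} + λ_{k₂} + λ_{k₃}` is minus the sum of the defects
`τ_j - λ_{k_j}`, and `|τ_j - λ_{k_j}| ≤ M_j ⟨k_j⟩^δ`. At the index `j₀` of the minimal frequency the
hypothesis gives `M_{j₀} N_min^δ < M_j N_max^δ`, so all three defects are at most
`max_{j ≠ j₀} M_j · N_max^δ`.

Conversely two of the `k_j` have the same sign, and up to a global sign the resonance of
`(x, y, -(x + y))`, `x, y > 0`, is `β G_{2m+1}(x, y) - α G_{2r+1}(x, y)` with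
`G_p(x, y) = (x + y)^p - x^p - y^p`. The tangent-line inequality for the convex `t ↦ t^p` gives
`G_{2m+1} ≥ 2m min(x, y) max(x, y)^{2m}` and `G_{2r+1} ≤ (2r + 1) min(x, y) (x + y)^{2r}`, so for
large frequencies the resonance is at least a constant times `N_min N_max^{2m}`.
-/

/-- The Japanese bracket `⟨x⟩ = (1 + |x|²)^{1/2}`. -/
noncomputable def jbr (x : ℝ) : ℝ := Real.sqrt (1 + x ^ 2)

/-- The modulation weight `M = ⟨(τ - λ_k)/⟨k⟩^δ⟩`. -/
noncomputable def modw (lam : ℤ → ℝ) (δ : ℝ) (k : ℤ) (τ : ℝ) : ℝ :=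
  jbr ((τ - lam k) / jbr (k : ℝ) ^ δ)

open Real Filter

lemma one_le_jbr (x : ℝ) : 1 ≤ jbr x :=
  Real.one_le_sqrt.2 (by nlinarith [sq_nonneg x])

lemma jbr_pos (x : ℝ) : 0 < jbr x :=
  one_pos.trans_le (one_le_jbr x)

lemma abs_le_jbr (x : ℝ) : |x| ≤ jbr x :=
  Real.abs_le_sqrt (by linarith)

lemma jbr_le_two_mul_abs {x : ℝ} (hx : 1 ≤ |x|) : jbr x ≤ 2 * |x| :=
  Real.sqrt_le_iff.2 ⟨by positivity, by nlinarith [sq_abs x]⟩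

lemma min_jbr_le {x y z : ℝ} (hx : 1 ≤ |x|) (hy : 1 ≤ |y|) (hz : 1 ≤ |z|) :
    min (jbr x) (min (jbr y) (jbr z)) ≤ 2 * min |x| (min |y| |z|) := by
  rw [mul_min_of_nonneg _ _ zero_le_two, mul_min_of_nonneg _ _ zero_le_two]
  exact min_le_min (jbr_le_two_mul_abs hx)
    (min_le_min (jbr_le_two_mul_abs hy) (jbr_le_two_mul_abs hz))

lemma max_jbr_le {x y z : ℝ} (hx : 1 ≤ |x|) (hy : 1 ≤ |y|) (hz : 1 ≤ |z|) :
    max (jbr x) (max (jbr y) (jbr z)) ≤ 2 * max |x| (max |y| |z|) := by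
  rw [mul_max_of_nonneg _ _ zero_le_two, mul_max_of_nonneg _ _ zero_le_two]
  exact max_le_max (jbr_le_two_mul_abs hx)
    (max_le_max (jbr_le_two_mul_abs hy) (jbr_le_two_mul_abs hz))

lemma abs_sub_le_modw_mul_rpow {lam : ℤ → ℝ} {δ : ℝ} (hδ : 0 ≤ δ) {k : ℤ} (τ : ℝ) {B : ℝ}
    (hB : jbr k ≤ B) : |τ - lam k| ≤ modw lam δ k τ * B ^ δ := by
  have hJ : 0 < jbr k ^ δ := rpow_pos_of_pos (jbr_pos _) δ
  calc |τ - lam k| = |(τ - lam k) / jbr k ^ δ| * jbr k ^ δ := by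
        rw [abs_div, abs_of_pos hJ, div_mul_cancel₀ _ hJ.ne']
    _ ≤ modw lam δ k τ * jbr k ^ δ := mul_le_mul_of_nonneg_right (abs_le_jbr _) hJ.le
    _ ≤ modw lam δ k τ * B ^ δ :=
        mul_le_mul_of_nonneg_left (rpow_le_rpow (jbr_pos _).le hB hδ) (jbr_pos _).le

lemma rpow_add_mul_sub_le_rpow {a b p : ℝ} (ha : 0 < a) (hb : 0 ≤ b) (hp : 1 ≤ p) :
    a ^ p + p * a ^ (p - 1) * (b - a) ≤ b ^ p := by
  have h := one_add_mul_self_le_rpow_one_add (s := b / a - 1)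
    (by linarith [div_nonneg hb ha.le]) hp
  rw [add_sub_cancel, div_rpow hb ha.le, le_div_iff₀ (rpow_pos_of_pos ha p)] at h
  calc a ^ p + p * a ^ (p - 1) * (b - a) = (1 + p * (b / a - 1)) * a ^ p := by
        rw [rpow_sub_one ha.ne']; field_simp
    _ ≤ b ^ p := h

lemma eventually_mul_rpow_le_rpow {s t : ℝ} (hst : s < t) (C : ℝ) :
    ∀ᶠ N in atTop, C * N ^ s ≤ N ^ t := by
  filter_upwards [(tendsto_rpow_atTop (sub_pos.2 hst)).eventually_ge_atTop C,
    eventually_gt_atTop 0] with N hC hN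
  calc C * N ^ s ≤ N ^ (t - s) * N ^ s := mul_le_mul_of_nonneg_right hC (rpow_nonneg hN.le _)
    _ = N ^ t := by rw [← rpow_add hN, sub_add_cancel]

noncomputable def rpowGap (p x y : ℝ) : ℝ := (x + y) ^ p - x ^ p - y ^ p

lemma rpowGap_comm (p x y : ℝ) : rpowGap p x y = rpowGap p y x := by
  unfold rpowGap; rw [add_comm x y]; ring

lemma rpowGap_nonneg {p x y : ℝ} (hp : 1 ≤ p) (hx : 0 ≤ x) (hy : 0 ≤ y) : 0 ≤ rpowGap p x y := by
  unfold rpowGap; linarith [add_rpow_le_rpow_add hx hy hp]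

lemma rpowGap_le {p x y : ℝ} (hp : 1 ≤ p) (hx : 0 < x) (hy : 0 < y) :
    rpowGap p x y ≤ p * min x y * (x + y) ^ (p - 1) := by
  wlog hxy : x ≤ y generalizing x y
  · rw [rpowGap_comm, min_comm, add_comm]; exact this hy hx (le_of_not_ge hxy)
  have hyp := rpow_add_mul_sub_le_rpow (add_pos hx hy) hy.le hp
  have hxp := rpow_nonneg hx.le p
  rw [min_eq_left hxy, rpowGap]
  linear_combination hyp + hxp

lemma mul_min_mul_max_rpow_le_rpowGap {p x y : ℝ} (hp : 1 ≤ p) (hx : 0 < x) (hy : 0 < y) :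
    (p - 1) * min x y * max x y ^ (p - 1) ≤ rpowGap p x y := by
  wlog hxy : x ≤ y generalizing x y
  · rw [rpowGap_comm, min_comm, max_comm]; exact this hy hx (le_of_not_ge hxy)
  have hxy' := rpow_add_mul_sub_le_rpow hy (add_pos hx hy).le hp
  have hxp : x ^ p ≤ x * y ^ (p - 1) := by
    calc x ^ p = x * x ^ (p - 1) := by rw [rpow_sub_one hx.ne']; field_simp
      _ ≤ x * y ^ (p - 1) := by gcongr
  rw [min_eq_left hxy, max_eq_right hxy, rpowGap]
  linear_combination hxy' + hxp

noncomputable def dispersion (α β μ m r x : ℝ) : ℝ :=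
  -β * x * |x| ^ (2 * m) + α * x * |x| ^ (2 * r) - 2 * μ * x

lemma dispersion_neg (α β μ m r x : ℝ) :
    dispersion α β μ m r (-x) = -dispersion α β μ m r x := by
  simp only [dispersion, abs_neg]; ring

lemma dispersion_add_add_dispersion_neg_add {x y : ℝ} (α β μ m r : ℝ) (hx : 0 < x) (hy : 0 < y) :
    dispersion α β μ m r x + dispersion α β μ m r y + dispersion α β μ m r (-(x + y)) =
      β * rpowGap (2 * m + 1) x y - α * rpowGap (2 * r + 1) x y := by
  simp only [dispersion, rpowGap, abs_neg, abs_of_pos hx, abs_of_pos hy, abs_of_pos (add_pos hx hy),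
    rpow_add_one hx.ne', rpow_add_one hy.ne', rpow_add_one (add_pos hx hy).ne']
  ring

lemma exists_forall_mul_min_mul_rpow_le_dispersion_sum (α μ : ℝ) {β m r : ℝ} (hβ : 0 < β)
    (hr : 0 < r) (hrm : r < m) :
    ∃ K : ℝ, ∀ x y : ℝ, 0 < x → 0 < y → K ≤ x + y →
      β * m / 2 ^ (2 * m) * min x y * (x + y) ^ (2 * m) ≤
        dispersion α β μ m r x + dispersion α β μ m r y + dispersion α β μ m r (-(x + y)) := by
  have hm : 0 < m := hr.trans hrm
  set c := β * m / 2 ^ (2 * m) with hc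
  have hc0 : 0 < c := by positivity
  obtain ⟨K, hK⟩ := eventually_atTop.1
    (eventually_mul_rpow_le_rpow (by linarith : 2 * r < 2 * m) (|α| * (2 * r + 1) / c))
  refine ⟨K, fun x y hx hy hKxy => ?_⟩
  rw [dispersion_add_add_dispersion_neg_add α β μ m r hx hy]
  have hN : 0 < x + y := add_pos hx hy
  have hlow := mul_min_mul_max_rpow_le_rpowGap (p := 2 * m + 1) (by linarith) hx hy
  have hup := rpowGap_le (p := 2 * r + 1) (by linarith) hx hy
  rw [add_sub_cancel_right] at hlow hup
  have hmax : (x + y) ^ (2 * m) / 2 ^ (2 * m) ≤ max x y ^ (2 * m) := by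
    rw [← div_rpow hN.le zero_le_two]
    exact rpow_le_rpow (by positivity) (by linarith [le_max_left x y, le_max_right x y])
      (by linarith)
  have hα : α * rpowGap (2 * r + 1) x y ≤ |α| * rpowGap (2 * r + 1) x y :=
    mul_le_mul_of_nonneg_right (le_abs_self α) (rpowGap_nonneg (by linarith) hx.le hy.le)
  have hsmall : |α| * (2 * r + 1) * (x + y) ^ (2 * r) ≤ c * (x + y) ^ (2 * m) := by
    have := mul_le_mul_of_nonneg_left (hK (x + y) hKxy) hc0.le
    rwa [← mul_assoc, mul_div_cancel₀ _ hc0.ne'] at this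
  calc c * min x y * (x + y) ^ (2 * m)
      = β * (2 * m * min x y * ((x + y) ^ (2 * m) / 2 ^ (2 * m))) -
          min x y * (c * (x + y) ^ (2 * m)) := by rw [hc]; ring
    _ ≤ β * (2 * m * min x y * max x y ^ (2 * m)) -
          min x y * (|α| * (2 * r + 1) * (x + y) ^ (2 * r)) := by gcongr
    _ ≤ β * rpowGap (2 * m + 1) x y - α * rpowGap (2 * r + 1) x y := by
        refine sub_le_sub (mul_le_mul_of_nonneg_left hlow hβ.le) (hα.trans ?_)
        exact (mul_le_mul_of_nonneg_left hup (abs_nonneg α)).trans_eq (by ring)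

lemma abs_dispersion_sum_eq_abs {a b : ℝ} (α β μ m r : ℝ) (hab : 0 < a * b) :
    |dispersion α β μ m r a + dispersion α β μ m r b + dispersion α β μ m r (-(a + b))| =
      |dispersion α β μ m r |a| + dispersion α β μ m r |b| +
        dispersion α β μ m r (-(|a| + |b|))| := by
  rcases mul_pos_iff.1 hab with ⟨ha, hb⟩ | ⟨ha, hb⟩
  · rw [abs_of_pos ha, abs_of_pos hb]
  · rw [abs_of_neg ha, abs_of_neg hb, show -(-a + -b) = -(-(a + b)) by ring,
      dispersion_neg, dispersion_neg, dispersion_neg, ← abs_neg]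
    ring_nf

lemma exists_forall_mul_min_mul_max_rpow_le_abs_dispersion_sum (α μ : ℝ) {β m r : ℝ}
    (hβ : 0 < β) (hr : 0 < r) (hrm : r < m) :
    ∃ C > 0, ∃ K : ℝ, ∀ a b c : ℝ, a ≠ 0 → b ≠ 0 → c ≠ 0 → a + b + c = 0 →
      K ≤ max |a| (max |b| |c|) →
      C * min |a| (min |b| |c|) * max |a| (max |b| |c|) ^ (2 * m) ≤
        |dispersion α β μ m r a + dispersion α β μ m r b + dispersion α β μ m r c| := by
  obtain ⟨K, hK⟩ := exists_forall_mul_min_mul_rpow_le_dispersion_sum α μ hβ hr hrm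
  have hm : 0 < m := hr.trans hrm
  refine ⟨β * m / 2 ^ (2 * m), by positivity, K, fun a b c ha hb hc habc => ?_⟩
  -- two of three nonzero numbers with zero sum have the same sign; rotate them to `a, b`
  wlog hab : 0 < a * b generalizing a b c
  · have hsign : 0 < b * c ∨ 0 < c * a := by
      have := ha.lt_or_gt; have := hb.lt_or_gt; have := hc.lt_or_gt
      simp only [mul_pos_iff] at hab ⊢
      tauto
    rw [show max |a| (max |b| |c|) = max |b| (max |c| |a|) by ac_rfl,
      show min |a| (min |b| |c|) = min |b| (min |c| |a|) by ac_rfl,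
      show dispersion α β μ m r a + dispersion α β μ m r b + dispersion α β μ m r c =
        dispersion α β μ m r b + dispersion α β μ m r c + dispersion α β μ m r a by ring]
    rcases hsign with hbc | hca
    · exact this b c a hb hc ha (by linarith) hbc
    · rw [show max |b| (max |c| |a|) = max |c| (max |a| |b|) by ac_rfl,
        show min |b| (min |c| |a|) = min |c| (min |a| |b|) by ac_rfl, add_rotate]
      exact this c a b hc ha hb (by linarith) hca
  obtain rfl : c = -(a + b) := by linarith
  have hsum : |a + b| = |a| + |b| := (abs_add_eq_add_abs_iff a b).2 <| by
    rcases mul_pos_iff.1 hab with ⟨ha, hb⟩ | ⟨ha, hb⟩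
    exacts [Or.inl ⟨ha.le, hb.le⟩, Or.inr ⟨ha.le, hb.le⟩]
  have hle : |b| ≤ |a| + |b| := le_add_of_nonneg_left (abs_nonneg a)
  rw [abs_neg, hsum, min_eq_left hle, max_eq_right hle,
    max_eq_right (le_add_of_nonneg_right (abs_nonneg b)), abs_dispersion_sum_eq_abs α β μ m r hab]
  intro hKab
  exact (hK |a| |b| (abs_pos.2 ha) (abs_pos.2 hb) hKab).trans (le_abs_self _)

lemma exists_forall_mul_max_jbr_rpow_mul_min_jbr_le_abs_lam_sum {α β μ m r : ℝ} (hβ : 0 < β)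
    (hr : 0 < r) (hrm : r < m) {lam : ℤ → ℝ}
    (hlam : ∀ k : ℤ, lam k =
      -β * (k : ℝ) * |(k : ℝ)| ^ (2 * m) + α * (k : ℝ) * |(k : ℝ)| ^ (2 * r) - 2 * μ * (k : ℝ)) :
    ∃ C > 0, ∃ K : ℕ, ∀ a b c : ℤ, a ≠ 0 → b ≠ 0 → c ≠ 0 → a + b + c = 0 →
      (K : ℤ) ≤ max |a| (max |b| |c|) →
      C * max (jbr a) (max (jbr b) (jbr c)) ^ (2 * m) * min (jbr a) (min (jbr b) (jbr c)) ≤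
        |lam a + lam b + lam c| := by
  obtain ⟨C, hC, K, hres⟩ :=
    exists_forall_mul_min_mul_max_rpow_le_abs_dispersion_sum α μ hβ hr hrm
  have hm : 0 < m := hr.trans hrm
  refine ⟨C / 2 ^ (2 * m + 1), by positivity, ⌈K⌉₊, fun a b c ha hb hc habc hK => ?_⟩
  have one_le_abs {k : ℤ} (hk : k ≠ 0) : 1 ≤ |(k : ℝ)| := by
    rw [← Int.cast_abs]; exact_mod_cast Int.one_le_abs hk
  have hKR : K ≤ max |(a : ℝ)| (max |(b : ℝ)| |(c : ℝ)|) :=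
    (Nat.le_ceil K).trans (by exact_mod_cast hK)
  have hlow := hres a b c (by exact_mod_cast ha) (by exact_mod_cast hb) (by exact_mod_cast hc)
    (by exact_mod_cast habc) hKR
  have hmin := min_jbr_le (one_le_abs ha) (one_le_abs hb) (one_le_abs hc)
  have hmax := max_jbr_le (one_le_abs ha) (one_le_abs hb) (one_le_abs hc)
  rw [hlam, hlam, hlam]
  calc C / 2 ^ (2 * m + 1) * max (jbr a) (max (jbr b) (jbr c)) ^ (2 * m) *
        min (jbr a) (min (jbr b) (jbr c))
      ≤ C / 2 ^ (2 * m + 1) * (2 * max |(a : ℝ)| (max |(b : ℝ)| |(c : ℝ)|)) ^ (2 * m) *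
        (2 * min |(a : ℝ)| (min |(b : ℝ)| |(c : ℝ)|)) := by
        gcongr
        · exact le_min (jbr_pos _).le (le_min (jbr_pos _).le (jbr_pos _).le)
        · exact (jbr_pos _).le.trans (le_max_left _ _)
    _ = C * min |(a : ℝ)| (min |(b : ℝ)| |(c : ℝ)|) *
        max |(a : ℝ)| (max |(b : ℝ)| |(c : ℝ)|) ^ (2 * m) := by
        rw [mul_rpow zero_le_two (by positivity), rpow_add_one two_ne_zero]
        field_simp
    _ ≤ _ := hlow

lemma mul_rpow_lt_mul_rpow_of_mul_div_rpow_lt {M₀ M₁ a b δ : ℝ} (ha : 0 < a) (hb : 0 < b)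
    (h : M₀ * (a / b) ^ δ < M₁) : M₀ * a ^ δ < M₁ * b ^ δ := by
  have hbδ := rpow_pos_of_pos hb δ
  rwa [div_rpow ha.le hb.le, ← mul_div_assoc, div_lt_iff₀ hbδ] at h

lemma abs_sum_lt_card_mul_of_sum_eq_zero {ι : Type*} [Fintype ι] [Nonempty ι] {f g : ι → ℝ}
    {B : ℝ} (hf : ∑ i, f i = 0) (h : ∀ i, |f i - g i| < B) :
    |∑ i, g i| < Fintype.card ι * B := calc
  |∑ i, g i| = |∑ i, (f i - g i)| := by rw [Finset.sum_sub_distrib, hf, zero_sub, abs_neg]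
  _ ≤ ∑ i, |f i - g i| := Finset.abs_sum_le_sum_abs _ _
  _ < ∑ _i : ι, B := Finset.sum_lt_sum_of_nonempty Finset.univ_nonempty fun i _ => h i
  _ = Fintype.card ι * B := by simp

theorem modulation_max_at_min_frequency_case2_general
    (α β μ m r δ : ℝ) (hβ : 0 < β) (hr : 0 < r) (hrm : r < m) (hδ : 0 < δ)
    (lam : ℤ → ℝ)
    (hlam : ∀ k : ℤ, lam k =
      -β * (k : ℝ) * |(k : ℝ)| ^ (2 * m) + α * (k : ℝ) * |(k : ℝ)| ^ (2 * r) - 2 * μ * (k : ℝ)) :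
    ∃ c > 0, ∃ K : ℕ, ∀ (k : Fin 3 → ℤ) (τ : Fin 3 → ℝ),
      (∀ j, k j ≠ 0) → (∑ j, τ j) = 0 → (∑ j, k j) = 0 →
      (K : ℤ) ≤ max |k 0| (max |k 1| |k 2|) →
      ∀ j₀ : Fin 3,
        (∀ j, modw lam δ (k j) (τ j) ≤ modw lam δ (k j₀) (τ j₀)) →
        (∀ j, jbr ((k j₀ : ℤ) : ℝ) ≤ jbr ((k j : ℤ) : ℝ)) →
        (∃ j, j ≠ j₀ ∧ modw lam δ (k j) (τ j) >
          modw lam δ (k j₀) (τ j₀) *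
            (min (jbr ((k 0 : ℤ) : ℝ)) (min (jbr ((k 1 : ℤ) : ℝ)) (jbr ((k 2 : ℤ) : ℝ))) /
              max (jbr ((k 0 : ℤ) : ℝ)) (max (jbr ((k 1 : ℤ) : ℝ)) (jbr ((k 2 : ℤ) : ℝ)))) ^ δ) →
        ∃ j, j ≠ j₀ ∧
          c * max (jbr ((k 0 : ℤ) : ℝ))
                (max (jbr ((k 1 : ℤ) : ℝ)) (jbr ((k 2 : ℤ) : ℝ))) ^ (2 * m - δ)
              * min (jbr ((k 0 : ℤ) : ℝ)) (min (jbr ((k 1 : ℤ) : ℝ)) (jbr ((k 2 : ℤ) : ℝ)))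
            ≤ modw lam δ (k j) (τ j) := by
  obtain ⟨C, hC, K, hres⟩ :=
    exists_forall_mul_max_jbr_rpow_mul_min_jbr_le_abs_lam_sum hβ hr hrm hlam
  refine ⟨C / 3, by positivity, K, fun k τ hk hτ hksum hK j₀ _ hj₀ ⟨j₁, hj₁, hgt⟩ => ?_⟩
  set Nmax := max (jbr (k 0)) (max (jbr (k 1)) (jbr (k 2)))
  set Nmin := min (jbr (k 0)) (min (jbr (k 1)) (jbr (k 2)))
  have hNmax : 0 < Nmax := (jbr_pos _).trans_le (le_max_left _ _)
  have hNmin : 0 < Nmin := lt_min (jbr_pos _) (lt_min (jbr_pos _) (jbr_pos _))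
  have hδNmax := rpow_pos_of_pos hNmax δ
  by_contra! hsmall
  have hscale : C / 3 * Nmax ^ (2 * m - δ) * Nmin * Nmax ^ δ = C / 3 * Nmax ^ (2 * m) * Nmin := by
    rw [rpow_sub hNmax]; field_simp
  have hdefect (j : Fin 3) : |τ j - lam (k j)| < C / 3 * Nmax ^ (2 * m) * Nmin := by
    rw [← hscale]
    by_cases hj : j = j₀
    · subst hj
      have hkj₀ : jbr (k j) ≤ Nmin := le_min (hj₀ 0) (le_min (hj₀ 1) (hj₀ 2))
      exact (abs_sub_le_modw_mul_rpow hδ.le _ hkj₀).trans_lt <|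
        (mul_rpow_lt_mul_rpow_of_mul_div_rpow_lt hNmin hNmax hgt).trans
          (mul_lt_mul_of_pos_right (hsmall j₁ hj₁) hδNmax)
    · have hkj : jbr (k j) ≤ Nmax := by fin_cases j <;> simp [Nmax]
      exact (abs_sub_le_modw_mul_rpow hδ.le _ hkj).trans_lt
        (mul_lt_mul_of_pos_right (hsmall j hj) hδNmax)
  have hsum := abs_sum_lt_card_mul_of_sum_eq_zero hτ hdefect
  rw [Fin.sum_univ_three] at hksum hsum
  simp only [Fintype.card_fin] at hsum
  linarith [hres _ _ _ (hk 0) (hk 1) (hk 2) hksum hK]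

/-- if the maximal modulation is attained at the index `j₀` of the minimal
frequency, but some other modulation exceeds `M_{j₀} (N_min/N_max)^δ`, then
`max_{j ≠ j₀} M_j ≥ c N_max^{2m-δ} N_min`. -/
theorem modulation_max_at_min_frequency_case2
    (α β μ m r δ : ℝ) (hα : 0 < α) (hβ : 0 < β) (hr : 0 < r) (hrm : r < m) (hδ : 0 < δ)
    (lam : ℤ → ℝ)
    (hlam : ∀ k : ℤ, lam k =
      -β * (k : ℝ) * |(k : ℝ)| ^ (2 * m) + α * (k : ℝ) * |(k : ℝ)| ^ (2 * r) - 2 * μ * (k : ℝ)) :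
    ∃ c > 0, ∃ K : ℕ, ∀ (k : Fin 3 → ℤ) (τ : Fin 3 → ℝ),
      (∀ j, k j ≠ 0) → (∑ j, τ j) = 0 → (∑ j, k j) = 0 →
      (K : ℤ) ≤ max |k 0| (max |k 1| |k 2|) →
      ∀ j₀ : Fin 3,
        (∀ j, modw lam δ (k j) (τ j) ≤ modw lam δ (k j₀) (τ j₀)) →
        (∀ j, jbr ((k j₀ : ℤ) : ℝ) ≤ jbr ((k j : ℤ) : ℝ)) →
        (∃ j, j ≠ j₀ ∧ modw lam δ (k j) (τ j) >
          modw lam δ (k j₀) (τ j₀) *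
            (min (jbr ((k 0 : ℤ) : ℝ)) (min (jbr ((k 1 : ℤ) : ℝ)) (jbr ((k 2 : ℤ) : ℝ))) /
              max (jbr ((k 0 : ℤ) : ℝ)) (max (jbr ((k 1 : ℤ) : ℝ)) (jbr ((k 2 : ℤ) : ℝ)))) ^ δ) →
        ∃ j, j ≠ j₀ ∧
          c * max (jbr ((k 0 : ℤ) : ℝ))
                (max (jbr ((k 1 : ℤ) : ℝ)) (jbr ((k 2 : ℤ) : ℝ))) ^ (2 * m - δ)
              * min (jbr ((k 0 : ℤ) : ℝ)) (min (jbr ((k 1 : ℤ) : ℝ)) (jbr ((k 2 : ℤ) : ℝ)))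
            ≤ modw lam δ (k j) (τ j) :=
  modulation_max_at_min_frequency_case2_general α β μ m r δ hβ hr hrm hδ lam hlam
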